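/- arXiv:2303.02073 — 2 statements merged into one kernel-verified Lean document; each statement's English description precedes it below -/
import Mathlib

section
/- Let π* be an expert policy, π a learner policy, and π' the intervention policy that follows π* at states where the Q-difference Q_h^{π*}(s,π*) − Q_h^{π*}(s,π) exceeds threshold p and follows π otherwise. Let β be the distribution over states visited by π' restricted to intervened states (normalized by δ), and suppose E_{s∼β}[ℓ(s, π, π*)] ≤ ε_b where ℓ is the 0-1 loss indicating π(·|s) ≠ π*(·|s). Let δ = E_{s∼d^{π'}}[I(Q_h^{π*}(s,π*) − Q_h^{π*}(s,π) > p)]. Then J(π*) − J(π) ≤ pH + δ ε_b H². -/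
open Finset

noncomputable section

attribute [local instance] Classical.propDecidable

variable {S A : Type*}

/-- `p` is a probability distribution on a finite type. -/
def IsDist {X : Type*} [Fintype X] (p : X → ℝ) : Prop :=
  (∀ x, 0 ≤ p x) ∧ ∑ x, p x = 1

/-- A (stochastic) policy: a distribution over actions at each state. -/
def IsPolicy [Fintype A] (π : S → A → ℝ) : Prop := ∀ s, IsDist (π s)

/-- A transition kernel. -/
def IsKernel [Fintype S] (P : S → A → S → ℝ) : Prop := ∀ s a, IsDist (P s a)

/-- Total variation distance on a finite type. -/
def tvDist {X : Type*} [Fintype X] (p q : X → ℝ) : ℝ := (1/2) * ∑ x, |p x - q x|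

variable [Fintype S] [Fintype A]

/-- Q-value for a (possibly nonstationary) policy `πt` (indexed by time step):
`Qn P r πt k t s a` is the expected reward-to-go with `k` steps remaining, at current time
step `t`, taking action `a` in state `s` and thereafter following `πt`. -/
def Qn (P : S → A → S → ℝ) (r : S → A → ℝ) (πt : ℕ → S → A → ℝ) :
    ℕ → ℕ → S → A → ℝ
  | 0, _ => fun _ _ => 0
  | k+1, t => fun s a =>
      r s a + ∑ s', P s a s' * ∑ a', πt (t+1) s' a' * Qn P r πt k (t+1) s' a'

/-- Expected Q-value when the first action is drawn from `π''`. -/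
def QEn (P : S → A → S → ℝ) (r : S → A → ℝ) (πt : ℕ → S → A → ℝ)
    (k t : ℕ) (s : S) (π'' : S → A → ℝ) : ℝ :=
  ∑ a, π'' s a * Qn P r πt k t s a

/-- State distribution at (0-indexed) step `h` when following `πt` from initial
distribution `ρ`. -/
def stateDistN (P : S → A → S → ℝ) (ρ : S → ℝ) (πt : ℕ → S → A → ℝ) : ℕ → S → ℝ
  | 0 => ρ
  | h+1 => fun s' => ∑ s, ∑ a, stateDistN P ρ πt h s * πt h s a * P s a s'

/-- Policy value: expected cumulative reward over horizon `H`. -/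
def Jn (P : S → A → S → ℝ) (r : S → A → ℝ) (ρ : S → ℝ) (H : ℕ)
    (πt : ℕ → S → A → ℝ) : ℝ :=
  ∑ s, ρ s * QEn P r πt H 0 s (πt 0)

/-- Stationary-policy Q-value with `k` steps remaining. -/
def Qst (P : S → A → S → ℝ) (r : S → A → ℝ) (π : S → A → ℝ) (k : ℕ) :
    S → A → ℝ := Qn P r (fun _ => π) k 0

/-- Stationary expected Q-value, first action drawn from `π''`. -/
def QE (P : S → A → S → ℝ) (r : S → A → ℝ) (π : S → A → ℝ) (k : ℕ) (s : S)
    (π'' : S → A → ℝ) : ℝ := ∑ a, π'' s a * Qst P r π k s a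

/-- State distribution at (0-indexed) step `h` under a stationary policy. -/
def stateDist (P : S → A → S → ℝ) (ρ : S → ℝ) (π : S → A → ℝ) : ℕ → S → ℝ :=
  stateDistN P ρ (fun _ => π)

/-- Policy value of a stationary policy. -/
def J (P : S → A → S → ℝ) (r : S → A → ℝ) (ρ : S → ℝ) (H : ℕ)
    (π : S → A → ℝ) : ℝ := Jn P r ρ H (fun _ => π)

section Helpers

variable (P : S → A → S → ℝ) (r : S → A → ℝ)

lemma Qn_succ (πt : ℕ → S → A → ℝ) (k t : ℕ) (s : S) (a : A) :
    Qn P r πt (k+1) t s a =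
      r s a + ∑ s', P s a s' * ∑ a', πt (t+1) s' a' * Qn P r πt k (t+1) s' a' := rfl

lemma Qn_zero (πt : ℕ → S → A → ℝ) (t : ℕ) (s : S) (a : A) :
    Qn P r πt 0 t s a = 0 := rfl

lemma Qn_shift (πt : ℕ → S → A → ℝ) :
    ∀ (k t : ℕ), Qn P r πt k (t+1) = Qn P r (fun n => πt (n+1)) k t := by
  intro k
  induction k with
  | zero => intro t; rfl
  | succ k ih =>
      intro t; funext s a
      simp only [Qn_succ, ih (t+1)]

lemma Qn_const (π : S → A → ℝ) :
    ∀ (k t : ℕ), Qn P r (fun _ => π) k t = Qn P r (fun _ => π) k 0 := by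
  intro k
  induction k with
  | zero => intro t; rfl
  | succ k ih =>
      intro t; funext s a
      simp only [Qn_succ, ih]

lemma Qst_succ (π : S → A → ℝ) (k : ℕ) (s : S) (a : A) :
    Qst P r π (k+1) s a = r s a + ∑ s', P s a s' * QE P r π k s' π := by
  simp only [Qst, QE, Qn_succ, Qn_const P r π k 1]

lemma Qn_bounds (hP : IsKernel P) (hr : ∀ s a, 0 ≤ r s a ∧ r s a ≤ 1)
    (πt : ℕ → S → A → ℝ) (hπt : ∀ t, IsPolicy (πt t)) :
    ∀ (k t : ℕ) (s : S) (a : A), 0 ≤ Qn P r πt k t s a ∧ Qn P r πt k t s a ≤ k := by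
  intro k
  induction k with
  | zero => intro t s a; simp [Qn]
  | succ k ih =>
      intro t s a
      have hV : ∀ s' : S, 0 ≤ (∑ a', πt (t+1) s' a' * Qn P r πt k (t+1) s' a') ∧
          (∑ a', πt (t+1) s' a' * Qn P r πt k (t+1) s' a') ≤ (k : ℝ) := by
        intro s'
        constructor
        · exact Finset.sum_nonneg fun a' _ =>
            mul_nonneg ((hπt (t+1) s').1 a') (ih (t+1) s' a').1
        · calc (∑ a', πt (t+1) s' a' * Qn P r πt k (t+1) s' a')
              ≤ ∑ a', πt (t+1) s' a' * (k : ℝ) := by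
                refine Finset.sum_le_sum fun a' _ => ?_
                exact mul_le_mul_of_nonneg_left (ih (t+1) s' a').2 ((hπt (t+1) s').1 a')
            _ = (k : ℝ) := by rw [← Finset.sum_mul, (hπt (t+1) s').2, one_mul]
      have hW : 0 ≤ (∑ s', P s a s' * ∑ a', πt (t+1) s' a' * Qn P r πt k (t+1) s' a') ∧
          (∑ s', P s a s' * ∑ a', πt (t+1) s' a' * Qn P r πt k (t+1) s' a') ≤ (k : ℝ) := by
        constructor
        · exact Finset.sum_nonneg fun s' _ => mul_nonneg ((hP s a).1 s') (hV s').1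
        · calc (∑ s', P s a s' * ∑ a', πt (t+1) s' a' * Qn P r πt k (t+1) s' a')
              ≤ ∑ s', P s a s' * (k : ℝ) := by
                refine Finset.sum_le_sum fun s' _ => ?_
                exact mul_le_mul_of_nonneg_left (hV s').2 ((hP s a).1 s')
            _ = (k : ℝ) := by rw [← Finset.sum_mul, (hP s a).2, one_mul]
      rw [Qn_succ]
      constructor
      · exact add_nonneg (hr s a).1 hW.1
      · push_cast
        linarith [(hr s a).2, hW.2]

lemma Qst_bounds (hP : IsKernel P) (hr : ∀ s a, 0 ≤ r s a ∧ r s a ≤ 1)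
    (π : S → A → ℝ) (hπ : IsPolicy π) (k : ℕ) (s : S) (a : A) :
    0 ≤ Qst P r π k s a ∧ Qst P r π k s a ≤ k :=
  Qn_bounds P r hP hr (fun _ => π) (fun _ => hπ) k 0 s a

lemma QE_bounds (hP : IsKernel P) (hr : ∀ s a, 0 ≤ r s a ∧ r s a ≤ 1)
    (π : S → A → ℝ) (hπ : IsPolicy π) (k : ℕ) (s : S)
    (π'' : S → A → ℝ) (hπ'' : IsDist (π'' s)) :
    0 ≤ QE P r π k s π'' ∧ QE P r π k s π'' ≤ k := by
  constructor
  · exact Finset.sum_nonneg fun a _ =>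
      mul_nonneg (hπ''.1 a) (Qst_bounds P r hP hr π hπ k s a).1
  · calc QE P r π k s π'' ≤ ∑ a, π'' s a * (k : ℝ) :=
        Finset.sum_le_sum fun a _ =>
          mul_le_mul_of_nonneg_left (Qst_bounds P r hP hr π hπ k s a).2 (hπ''.1 a)
      _ = (k : ℝ) := by rw [← Finset.sum_mul, hπ''.2, one_mul]

lemma stateDistN_facts (hP : IsKernel P) (ρ : S → ℝ) (hρ : IsDist ρ)
    (πt : ℕ → S → A → ℝ) (hπt : ∀ t, IsPolicy (πt t)) :
    ∀ h, (∀ s, 0 ≤ stateDistN P ρ πt h s) ∧ (∑ s, stateDistN P ρ πt h s = 1) := by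
  intro h
  induction h with
  | zero => exact ⟨hρ.1, hρ.2⟩
  | succ h ih =>
      constructor
      · intro s'
        exact Finset.sum_nonneg fun s _ => Finset.sum_nonneg fun a _ =>
          mul_nonneg (mul_nonneg (ih.1 s) ((hπt h s).1 a)) ((hP s a).1 s')
      · show (∑ s', ∑ s, ∑ a, stateDistN P ρ πt h s * πt h s a * P s a s') = 1
        rw [Finset.sum_comm]
        have : ∀ s, (∑ s', ∑ a, stateDistN P ρ πt h s * πt h s a * P s a s')
            = stateDistN P ρ πt h s := by
          intro s
          rw [Finset.sum_comm]
          calc (∑ a, ∑ s', stateDistN P ρ πt h s * πt h s a * P s a s')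
              = ∑ a, stateDistN P ρ πt h s * πt h s a * ∑ s', P s a s' := by
                refine Finset.sum_congr rfl fun a _ => ?_
                rw [Finset.mul_sum]
            _ = ∑ a, stateDistN P ρ πt h s * πt h s a := by
                refine Finset.sum_congr rfl fun a _ => ?_
                rw [(hP s a).2, mul_one]
            _ = stateDistN P ρ πt h s := by
                rw [← Finset.mul_sum, (hπt h s).2, mul_one]
        rw [Finset.sum_congr rfl fun s _ => this s, ih.2]

lemma stateDistN_shift (μ : S → ℝ) (πt : ℕ → S → A → ℝ) :
    ∀ j, stateDistN P (fun s' => ∑ s, ∑ a, μ s * πt 0 s a * P s a s')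
        (fun n => πt (n+1)) j = stateDistN P μ πt (j+1) := by
  intro j
  induction j with
  | zero => rfl
  | succ j ih =>
      show (fun s' => ∑ s, ∑ a, _ * _ * P s a s') = fun s' => ∑ s, ∑ a, _ * _ * P s a s'
      funext s'
      simp only [ih]

/-- Performance difference lemma. -/
lemma pdl (πb : S → A → ℝ) :
    ∀ (k : ℕ) (πt : ℕ → S → A → ℝ) (μ : S → ℝ),
    (∑ s, μ s * ((∑ a, πt 0 s a * Qn P r πt k 0 s a) - QE P r πb k s πb))
    = ∑ j ∈ Finset.range k, ∑ s, stateDistN P μ πt j s *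
        (QE P r πb (k - j) s (πt j) - QE P r πb (k - j) s πb) := by
  intro k
  induction k with
  | zero => intro πt μ; simp [Qn, QE, Qst]
  | succ k ih =>
      intro πt μ
      have tri : ∀ (F : S → A → S → ℝ),
          (∑ s, ∑ a, ∑ s', F s a s') = ∑ s', ∑ s, ∑ a, F s a s' := by
        intro F
        calc (∑ s, ∑ a, ∑ s', F s a s') = ∑ s, ∑ s', ∑ a, F s a s' :=
              Finset.sum_congr rfl fun s _ => Finset.sum_comm
          _ = ∑ s', ∑ s, ∑ a, F s a s' := Finset.sum_comm
      have swap : ∀ D : S → ℝ, (∑ s, μ s * ∑ a, πt 0 s a * ∑ s', P s a s' * D s')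
          = ∑ s', (∑ s, ∑ a, μ s * πt 0 s a * P s a s') * D s' := by
        intro D
        calc (∑ s, μ s * ∑ a, πt 0 s a * ∑ s', P s a s' * D s')
            = ∑ s, ∑ a, ∑ s', μ s * πt 0 s a * P s a s' * D s' := by
              simp only [Finset.mul_sum]
              exact Finset.sum_congr rfl fun s _ => Finset.sum_congr rfl fun a _ =>
                Finset.sum_congr rfl fun s' _ => by ring
          _ = ∑ s', ∑ s, ∑ a, μ s * πt 0 s a * P s a s' * D s' := tri _
          _ = ∑ s', (∑ s, ∑ a, μ s * πt 0 s a * P s a s') * D s' := by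
              refine Finset.sum_congr rfl fun s' _ => ?_
              rw [Finset.sum_mul]
              exact Finset.sum_congr rfl fun s _ => (Finset.sum_mul _ _ _).symm
      have key : ∀ s, ((∑ a, πt 0 s a * Qn P r πt (k+1) 0 s a) - QE P r πb (k+1) s πb)
          = (∑ a, πt 0 s a * ∑ s', P s a s' *
              ((∑ a', πt (0+1) s' a' * Qn P r πt k (0+1) s' a') - QE P r πb k s' πb))
            + (QE P r πb (k+1) s (πt 0) - QE P r πb (k+1) s πb) := by
        intro s
        have e1 : QE P r πb (k+1) s (πt 0)
            = ∑ a, πt 0 s a * (r s a + ∑ s', P s a s' * QE P r πb k s' πb) := by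
          simp only [QE, Qst_succ]
        have e2 : (∑ a, πt 0 s a * Qn P r πt (k+1) 0 s a)
            = ∑ a, πt 0 s a * (r s a + ∑ s', P s a s' *
                (∑ a', πt (0+1) s' a' * Qn P r πt k (0+1) s' a')) := by
          simp only [Qn_succ]
        rw [e1, e2]
        have e3 : ∀ a, πt 0 s a * (r s a + ∑ s', P s a s' *
                (∑ a', πt (0+1) s' a' * Qn P r πt k (0+1) s' a'))
            = πt 0 s a * ∑ s', P s a s' *
                ((∑ a', πt (0+1) s' a' * Qn P r πt k (0+1) s' a') - QE P r πb k s' πb)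
              + πt 0 s a * (r s a + ∑ s', P s a s' * QE P r πb k s' πb) := by
          intro a
          have : (∑ s', P s a s' *
                ((∑ a', πt (0+1) s' a' * Qn P r πt k (0+1) s' a') - QE P r πb k s' πb))
              = (∑ s', P s a s' * (∑ a', πt (0+1) s' a' * Qn P r πt k (0+1) s' a'))
                - ∑ s', P s a s' * QE P r πb k s' πb := by
            rw [← Finset.sum_sub_distrib]
            exact Finset.sum_congr rfl fun s' _ => by ring
          rw [this]; ring
        rw [Finset.sum_congr rfl fun a _ => e3 a, Finset.sum_add_distrib]
        ring
      calc (∑ s, μ s * ((∑ a, πt 0 s a * Qn P r πt (k+1) 0 s a) - QE P r πb (k+1) s πb))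
          = (∑ s, μ s * ∑ a, πt 0 s a * ∑ s', P s a s' *
              ((∑ a', πt (0+1) s' a' * Qn P r πt k (0+1) s' a') - QE P r πb k s' πb))
            + ∑ s, μ s * (QE P r πb (k+1) s (πt 0) - QE P r πb (k+1) s πb) := by
            rw [← Finset.sum_add_distrib]
            exact Finset.sum_congr rfl fun s _ => by rw [key s]; ring
        _ = (∑ s', (∑ s, ∑ a, μ s * πt 0 s a * P s a s') *
              ((∑ a', πt (0+1) s' a' * Qn P r πt k (0+1) s' a') - QE P r πb k s' πb))
            + ∑ s, μ s * (QE P r πb (k+1) s (πt 0) - QE P r πb (k+1) s πb) := by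
            rw [swap]
        _ = (∑ j ∈ Finset.range k, ∑ s, stateDistN P μ πt (j+1) s *
              (QE P r πb (k - j) s (πt (j+1)) - QE P r πb (k - j) s πb))
            + ∑ s, μ s * (QE P r πb (k+1) s (πt 0) - QE P r πb (k+1) s πb) := by
            congr 1
            have hih := ih (fun n => πt (n+1))
              (fun s' => ∑ s, ∑ a, μ s * πt 0 s a * P s a s')
            simp only [Qn_shift P r πt k 0] at *
            rw [hih]
            exact Finset.sum_congr rfl fun j _ => by
              rw [stateDistN_shift P μ πt j]
        _ = ∑ j ∈ Finset.range (k+1), ∑ s, stateDistN P μ πt j s *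
              (QE P r πb (k + 1 - j) s (πt j) - QE P r πb (k + 1 - j) s πb) := by
            rw [Finset.sum_range_succ']
            congr 1
            exact Finset.sum_congr rfl fun j _ => by
              rw [Nat.succ_sub_succ]

end Helpers

/-- Intervention sub-optimality bound: `J(π*) − J(π) ≤ pH + δ ε_b H²`. -/
theorem intervention_suboptimality
    (P : S → A → S → ℝ) (r : S → A → ℝ) (ρ : S → ℝ) (H : ℕ)
    (hP : IsKernel P) (hρ : IsDist ρ) (hr : ∀ s a, 0 ≤ r s a ∧ r s a ≤ 1)
    (πstar π : S → A → ℝ) (hstar : IsPolicy πstar) (hπ : IsPolicy π)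
    (p εb : ℝ) (hp : 0 ≤ p) (hεb : 0 ≤ εb)
    (π' : ℕ → S → A → ℝ)
    (hπ' : ∀ h s, π' h s =
      if p < QE P r πstar (H - h) s πstar - QE P r πstar (H - h) s π
      then πstar s else π s)
    (δ : ℝ)
    (hδ : δ = (1 / (H : ℝ)) * ∑ h ∈ Finset.range H, ∑ s, stateDistN P ρ π' h s *
      (if p < QE P r πstar (H - h) s πstar - QE P r πstar (H - h) s π then 1 else 0))
    (β : S → ℝ)
    (hβ : ∀ s, β s = (1 / ((H : ℝ) * δ)) * ∑ h ∈ Finset.range H,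
      (if π' h s ≠ π s then 1 else 0) * stateDistN P ρ π' h s)
    (hloss : ∑ s, β s * (if π s ≠ πstar s then 1 else 0) ≤ εb) :
    J P r ρ H πstar - J P r ρ H π ≤ p * H + δ * εb * (H : ℝ)^2 := by
  have hpol : ∀ h, IsPolicy (π' h) := by
    intro h s
    rw [hπ' h s]
    split_ifs
    · exact hstar s
    · exact hπ s
  have hd := stateDistN_facts P hP ρ hρ π' hpol
  rcases Nat.eq_zero_or_pos H with hH | hH
  · subst hH
    simp [J, Jn, QEn, Qn_zero, mul_zero, Finset.sum_const_zero]
  have hHpos : (0:ℝ) < (H:ℝ) := by exact_mod_cast hH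
  -- the performance difference decomposition
  set χ : ℕ → S → ℝ := fun h s =>
    (if π' h s ≠ π s then 1 else 0) * (if π s ≠ πstar s then 1 else 0) with hχdef
  have key1 := pdl P r πstar H π' ρ
  have key2 := pdl P r π H π' ρ
  have hdiff : J P r ρ H πstar - J P r ρ H π
      = ∑ h ∈ Finset.range H, ∑ s, stateDistN P ρ π' h s *
          ((QE P r π (H-h) s (π' h) - QE P r π (H-h) s π)
           - (QE P r πstar (H-h) s (π' h) - QE P r πstar (H-h) s πstar)) := by
    calc J P r ρ H πstar - J P r ρ H π
        = (∑ s, ρ s * ((∑ a, π' 0 s a * Qn P r π' H 0 s a) - QE P r π H s π))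
          - ∑ s, ρ s * ((∑ a, π' 0 s a * Qn P r π' H 0 s a) - QE P r πstar H s πstar) := by
          show (∑ s, ρ s * QE P r πstar H s πstar) - (∑ s, ρ s * QE P r π H s π) = _
          rw [← Finset.sum_sub_distrib, ← Finset.sum_sub_distrib]
          exact Finset.sum_congr rfl fun s _ => by ring
      _ = (∑ h ∈ Finset.range H, ∑ s, stateDistN P ρ π' h s *
            (QE P r π (H - h) s (π' h) - QE P r π (H - h) s π))
          - ∑ h ∈ Finset.range H, ∑ s, stateDistN P ρ π' h s *
            (QE P r πstar (H - h) s (π' h) - QE P r πstar (H - h) s πstar) := by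
          rw [key2, key1]
      _ = _ := by
          rw [← Finset.sum_sub_distrib]
          exact Finset.sum_congr rfl fun h _ => by
            rw [← Finset.sum_sub_distrib]
            exact Finset.sum_congr rfl fun s _ => by ring
  have hχ0 : ∀ h s, 0 ≤ χ h s := by
    intro h s
    rw [hχdef]
    dsimp only
    split_ifs <;> norm_num
  -- pointwise bound
  have hbound : ∀ h s, ((QE P r π (H-h) s (π' h) - QE P r π (H-h) s π)
      - (QE P r πstar (H-h) s (π' h) - QE P r πstar (H-h) s πstar))
      ≤ p + (H:ℝ) * χ h s := by
    intro h s
    have hK : ((H - h : ℕ) : ℝ) ≤ (H : ℝ) := by exact_mod_cast Nat.sub_le H h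
    have hHχ : 0 ≤ (H:ℝ) * χ h s := mul_nonneg (le_of_lt hHpos) (hχ0 h s)
    by_cases hc : p < QE P r πstar (H - h) s πstar - QE P r πstar (H - h) s π
    · have hps : π' h s = πstar s := by rw [hπ' h s, if_pos hc]
      have eA : QE P r πstar (H-h) s (π' h) = QE P r πstar (H-h) s πstar :=
        Finset.sum_congr rfl fun a _ => by rw [hps]
      have eB : QE P r π (H-h) s (π' h) = QE P r π (H-h) s πstar :=
        Finset.sum_congr rfl fun a _ => by rw [hps]
      by_cases hsame : πstar s = π s
      · have eC : QE P r π (H-h) s πstar = QE P r π (H-h) s π :=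
          Finset.sum_congr rfl fun a _ => by rw [hsame]
        rw [eA, eB, eC]
        simp only [sub_self, zero_sub, sub_self, neg_zero]
        linarith
      · have hne1 : π' h s ≠ π s := by rw [hps]; exact hsame
        have hne2 : π s ≠ πstar s := fun hh => hsame hh.symm
        have hχ1 : χ h s = 1 := by rw [hχdef]; dsimp only; rw [if_pos hne1, if_pos hne2, one_mul]
        rw [eA, eB, hχ1, mul_one]
        have h1 := QE_bounds P r hP hr π hπ (H-h) s πstar (hstar s)
        have h2 := QE_bounds P r hP hr π hπ (H-h) s π (hπ s)
        linarith [h1.2, h2.1]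
    · have hps : π' h s = π s := by rw [hπ' h s, if_neg hc]
      have eA : QE P r πstar (H-h) s (π' h) = QE P r πstar (H-h) s π :=
        Finset.sum_congr rfl fun a _ => by rw [hps]
      have eB : QE P r π (H-h) s (π' h) = QE P r π (H-h) s π :=
        Finset.sum_congr rfl fun a _ => by rw [hps]
      rw [eA, eB]
      push_neg at hc
      linarith
  -- sum of pointwise bounds
  have hsum1 : J P r ρ H πstar - J P r ρ H π
      ≤ ∑ h ∈ Finset.range H, ∑ s, stateDistN P ρ π' h s * (p + (H:ℝ) * χ h s) := by
    rw [hdiff]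
    refine Finset.sum_le_sum fun h _ => Finset.sum_le_sum fun s _ => ?_
    exact mul_le_mul_of_nonneg_left (hbound h s) ((hd h).1 s)
  have hsplit : (∑ h ∈ Finset.range H, ∑ s, stateDistN P ρ π' h s * (p + (H:ℝ) * χ h s))
      = p * H + (H:ℝ) * ∑ h ∈ Finset.range H, ∑ s, stateDistN P ρ π' h s * χ h s := by
    have hper : ∀ h, (∑ s, stateDistN P ρ π' h s * (p + (H:ℝ) * χ h s))
        = p + (H:ℝ) * ∑ s, stateDistN P ρ π' h s * χ h s := by
      intro h
      calc (∑ s, stateDistN P ρ π' h s * (p + (H:ℝ) * χ h s))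
          = (∑ s, stateDistN P ρ π' h s * p)
            + ∑ s, (H:ℝ) * (stateDistN P ρ π' h s * χ h s) := by
            rw [← Finset.sum_add_distrib]
            exact Finset.sum_congr rfl fun s _ => by ring
        _ = p + (H:ℝ) * ∑ s, stateDistN P ρ π' h s * χ h s := by
            rw [← Finset.sum_mul, (hd h).2, one_mul, ← Finset.mul_sum]
    rw [Finset.sum_congr rfl fun h _ => hper h, Finset.sum_add_distrib,
      Finset.sum_const, Finset.card_range, nsmul_eq_mul, ← Finset.mul_sum]
    ring
  -- bound the χ part
  have hδ0 : 0 ≤ δ := by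
    rw [hδ]
    refine mul_nonneg (by positivity) (Finset.sum_nonneg fun h _ =>
      Finset.sum_nonneg fun s _ => mul_nonneg ((hd h).1 s) ?_)
    split_ifs <;> norm_num
  have hT : (∑ h ∈ Finset.range H, ∑ s, stateDistN P ρ π' h s * χ h s)
      ≤ (H:ℝ) * δ * εb := by
    have hswap : (∑ h ∈ Finset.range H, ∑ s, stateDistN P ρ π' h s * χ h s)
        = ∑ s, (if π s ≠ πstar s then (1:ℝ) else 0) *
            ∑ h ∈ Finset.range H, (if π' h s ≠ π s then (1:ℝ) else 0) * stateDistN P ρ π' h s := by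
      rw [Finset.sum_comm]
      refine Finset.sum_congr rfl fun s _ => ?_
      rw [Finset.mul_sum]
      exact Finset.sum_congr rfl fun h _ => by rw [hχdef]; dsimp only; ring
    rw [hswap]
    rcases eq_or_lt_of_le hδ0 with hδz | hδpos
    · -- δ = 0 : every intervened-state mass is zero
      have hS0 : (∑ h ∈ Finset.range H, ∑ s, stateDistN P ρ π' h s *
          (if p < QE P r πstar (H - h) s πstar - QE P r πstar (H - h) s π then (1:ℝ) else 0)) = 0 := by
        have h2 : (1 / (H:ℝ)) * (∑ h ∈ Finset.range H, ∑ s, stateDistN P ρ π' h s *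
            (if p < QE P r πstar (H - h) s πstar - QE P r πstar (H - h) s π then (1:ℝ) else 0)) = 0 :=
          hδ.symm.trans hδz.symm
        have h1H : (1 / (H:ℝ)) ≠ 0 := by positivity
        rcases mul_eq_zero.mp h2 with h3 | h3
        · exact absurd h3 h1H
        · exact h3
      have hterm0 : ∀ h ∈ Finset.range H, ∀ s,
          stateDistN P ρ π' h s *
            (if p < QE P r πstar (H - h) s πstar - QE P r πstar (H - h) s π then (1:ℝ) else 0) = 0 := by
        have hnn : ∀ h ∈ Finset.range H, 0 ≤ ∑ s, stateDistN P ρ π' h s *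
            (if p < QE P r πstar (H - h) s πstar - QE P r πstar (H - h) s π then (1:ℝ) else 0) := by
          intro h _
          refine Finset.sum_nonneg fun s _ => mul_nonneg ((hd h).1 s) ?_
          split_ifs <;> norm_num
        have houter := (Finset.sum_eq_zero_iff_of_nonneg hnn).mp hS0
        intro h hh s
        have hinner : ∀ s' ∈ (Finset.univ : Finset S), 0 ≤ stateDistN P ρ π' h s' *
            (if p < QE P r πstar (H - h) s' πstar - QE P r πstar (H - h) s' π then (1:ℝ) else 0) := by
          intro s' _
          refine mul_nonneg ((hd h).1 s') ?_
          split_ifs <;> norm_num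
        exact (Finset.sum_eq_zero_iff_of_nonneg hinner).mp (houter h hh) s (Finset.mem_univ s)
      have hzero : (∑ s, (if π s ≠ πstar s then (1:ℝ) else 0) *
          ∑ h ∈ Finset.range H, (if π' h s ≠ π s then (1:ℝ) else 0) * stateDistN P ρ π' h s) = 0 := by
        refine Finset.sum_eq_zero fun s _ => ?_
        have : (∑ h ∈ Finset.range H, (if π' h s ≠ π s then (1:ℝ) else 0) * stateDistN P ρ π' h s) = 0 := by
          refine Finset.sum_eq_zero fun h hh => ?_
          by_cases hne : π' h s = π s
          · rw [if_neg (by simpa using hne), zero_mul]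
          · have hc : p < QE P r πstar (H - h) s πstar - QE P r πstar (H - h) s π := by
              by_contra hcn
              exact hne (by rw [hπ' h s, if_neg hcn])
            have := hterm0 h hh s
            rw [if_pos hc, mul_one] at this
            rw [this, mul_zero]
        rw [this, mul_zero]
      rw [hzero, ← hδz]
      simp
    · -- δ > 0
      have hHδpos : (0:ℝ) < (H:ℝ) * δ := mul_pos hHpos hδpos
      have hTs : ∀ s, (∑ h ∈ Finset.range H,
          (if π' h s ≠ π s then (1:ℝ) else 0) * stateDistN P ρ π' h s) = (H:ℝ) * δ * β s := by
        intro s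
        rw [hβ s]
        field_simp
      calc (∑ s, (if π s ≠ πstar s then (1:ℝ) else 0) *
            ∑ h ∈ Finset.range H, (if π' h s ≠ π s then (1:ℝ) else 0) * stateDistN P ρ π' h s)
          = (H:ℝ) * δ * ∑ s, β s * (if π s ≠ πstar s then (1:ℝ) else 0) := by
            rw [Finset.mul_sum]
            exact Finset.sum_congr rfl fun s _ => by rw [hTs s]; ring
        _ ≤ (H:ℝ) * δ * εb := mul_le_mul_of_nonneg_left hloss (le_of_lt hHδpos)
  calc J P r ρ H πstar - J P r ρ H π
      ≤ p * H + (H:ℝ) * ∑ h ∈ Finset.range H, ∑ s, stateDistN P ρ π' h s * χ h s := by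
        rw [← hsplit]; exact hsum1
    _ ≤ p * H + (H:ℝ) * ((H:ℝ) * δ * εb) := by
        have := mul_le_mul_of_nonneg_left hT (le_of_lt hHpos)
        linarith
    _ = p * H + δ * εb * (H:ℝ)^2 := by ring
end
end

section
/- DAgger bound under recoverability: Suppose the MDP satisfies μ-recoverability, i.e., for each step t and state s, Q_t^{π*}(s, π*) − Q_t^{π*}(s, a) ≤ μ for all actions a. Let π be a policy with E_{s∼d^π}[ℓ(s, π, π*)] = ε_b under its own state distribution d^π, where ℓ is the 0-1 loss. Then J(π*) − J(π) ≤ μ H ε_b. -/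
open Finset

noncomputable section

attribute [local instance] Classical.propDecidable

variable {S A : Type*}

variable [Fintype S] [Fintype A]

lemma qn_shift (P : S → A → S → ℝ) (r : S → A → ℝ) (π : S → A → ℝ) :
    ∀ k t, Qn P r (fun _ => π) k t = Qn P r (fun _ => π) k 0
  | 0, _ => rfl
  | (k+1), t => by
      funext s a
      simp only [Qn]
      rw [qn_shift P r π k (t+1), qn_shift P r π k 1]

lemma qst_bellman (P : S → A → S → ℝ) (r : S → A → ℝ) (π : S → A → ℝ) (k : ℕ) (s : S) (a : A) :
    Qst P r π (k+1) s a = r s a + ∑ s', P s a s' * QE P r π k s' π := by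
  simp only [Qst, QE, Qn, qn_shift P r π k 1]

lemma stateDist_succ (P : S → A → S → ℝ) (π : S → A → ℝ) (d : S → ℝ) :
    ∀ j, stateDist P d π (j+1) =
      stateDist P (fun s' => ∑ s, ∑ a, d s * π s a * P s a s') π j
  | 0 => rfl
  | (j+1) => by
      show (fun s' => ∑ s, ∑ a, stateDist P d π (j+1) s * π s a * P s a s') = _
      rw [stateDist_succ P π d j]
      rfl

lemma stateDist_nonneg (P : S → A → S → ℝ) (π : S → A → ℝ) (d : S → ℝ)
    (hP : IsKernel P) (hπ : IsPolicy π) (hd : ∀ s, 0 ≤ d s) :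
    ∀ j s, 0 ≤ stateDist P d π j s
  | 0, s => hd s
  | (j+1), s' => by
      refine Finset.sum_nonneg fun s _ => Finset.sum_nonneg fun a _ => ?_
      exact mul_nonneg (mul_nonneg (stateDist_nonneg P π d hP hπ hd j s)
        ((hπ s).1 a)) ((hP s a).1 s')

lemma pdl_aux (P : S → A → S → ℝ) (r : S → A → ℝ) (πstar π : S → A → ℝ) :
    ∀ (k : ℕ) (d : S → ℝ),
      ∑ s, d s * (QE P r πstar k s πstar - QE P r π k s π)
      = ∑ j ∈ Finset.range k, ∑ s, stateDist P d π j s *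
          (QE P r πstar (k-j) s πstar - QE P r πstar (k-j) s π)
  | 0, d => by simp [QE, Qst, Qn]
  | (k+1), d => by
      rw [Finset.sum_range_succ']
      have h0 : ∀ j : ℕ, stateDist P d π (j+1) =
          stateDist P (fun s' => ∑ s, ∑ a, d s * π s a * P s a s') π j :=
        stateDist_succ P π d
      have hrw : ∀ j ∈ Finset.range k,
          (∑ s, stateDist P d π (j+1) s *
            (QE P r πstar (k+1-(j+1)) s πstar - QE P r πstar (k+1-(j+1)) s π))
          = ∑ s, stateDist P (fun s' => ∑ s, ∑ a, d s * π s a * P s a s') π j s *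
            (QE P r πstar (k-j) s πstar - QE P r πstar (k-j) s π) := by
        intro j _
        rw [h0 j]
        simp only [Nat.add_sub_add_right]
      rw [Finset.sum_congr rfl hrw, ← pdl_aux P r πstar π k
        (fun s' => ∑ s, ∑ a, d s * π s a * P s a s')]
      have key : ∑ s, d s * (QE P r πstar (k+1) s π - QE P r π (k+1) s π)
          = ∑ s', (∑ s, ∑ a, d s * π s a * P s a s') *
              (QE P r πstar k s' πstar - QE P r π k s' π) := by
        have hdiff : ∀ s, QE P r πstar (k+1) s π - QE P r π (k+1) s π
            = ∑ a, π s a * ∑ s', P s a s' *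
                (QE P r πstar k s' πstar - QE P r π k s' π) := by
          intro s
          have e1 : QE P r πstar (k+1) s π
              = ∑ a, π s a * (r s a + ∑ s', P s a s' * QE P r πstar k s' πstar) := by
            simp only [QE, qst_bellman]
          have e2 : QE P r π (k+1) s π
              = ∑ a, π s a * (r s a + ∑ s', P s a s' * QE P r π k s' π) := by
            simp only [QE, qst_bellman]
          rw [e1, e2, ← Finset.sum_sub_distrib]
          refine Finset.sum_congr rfl fun a _ => ?_
          rw [← mul_sub]
          congr 1
          rw [add_sub_add_left_eq_sub, ← Finset.sum_sub_distrib]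
          refine Finset.sum_congr rfl fun s' _ => ?_
          ring
        calc ∑ s, d s * (QE P r πstar (k+1) s π - QE P r π (k+1) s π)
            = ∑ s, ∑ a, ∑ s', d s * π s a * P s a s' *
                (QE P r πstar k s' πstar - QE P r π k s' π) := by
              refine Finset.sum_congr rfl fun s _ => ?_
              rw [hdiff s]
              simp only [Finset.mul_sum]
              refine Finset.sum_congr rfl fun a _ => ?_
              refine Finset.sum_congr rfl fun s' _ => ?_
              ring
          _ = ∑ s, ∑ s', ∑ a, d s * π s a * P s a s' *
                (QE P r πstar k s' πstar - QE P r π k s' π) := by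
              exact Finset.sum_congr rfl fun s _ => Finset.sum_comm
          _ = ∑ s', ∑ s, ∑ a, d s * π s a * P s a s' *
                (QE P r πstar k s' πstar - QE P r π k s' π) := Finset.sum_comm
          _ = ∑ s', (∑ s, ∑ a, d s * π s a * P s a s') *
                (QE P r πstar k s' πstar - QE P r π k s' π) := by
              refine Finset.sum_congr rfl fun s' _ => ?_
              rw [Finset.sum_mul]
              exact Finset.sum_congr rfl fun s _ => (Finset.sum_mul _ _ _).symm
      have split : ∀ s, d s * (QE P r πstar (k+1) s πstar - QE P r π (k+1) s π)
          = d s * (QE P r πstar (k+1) s πstar - QE P r πstar (k+1) s π)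
            + d s * (QE P r πstar (k+1) s π - QE P r π (k+1) s π) := fun s => by ring
      rw [Finset.sum_congr rfl fun s _ => split s, Finset.sum_add_distrib, key]
      have hd0 : ∀ s, stateDist P d π 0 s = d s := fun s => rfl
      simp only [Nat.sub_zero, hd0, mul_sub]
      rw [add_comm]

/-- DAgger bound under `μ`-recoverability: if every single-action deviation from the
deterministic expert loses at most `μ` in expert Q-value, and the 0-1 loss of `π` under
its own average state distribution is `ε_b`, then `J(π*) − J(π) ≤ μ H ε_b`. -/
theorem dagger_bound_recoverability
    (P : S → A → S → ℝ) (r : S → A → ℝ) (ρ : S → ℝ) (H : ℕ)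
    (hP : IsKernel P) (hρ : IsDist ρ) (hr : ∀ s a, 0 ≤ r s a ∧ r s a ≤ 1)
    (πstar π : S → A → ℝ) (hstar : IsPolicy πstar) (hπ : IsPolicy π)
    (f : S → A) (hdet : ∀ s a, πstar s a = if a = f s then 1 else 0)
    (μ : ℝ)
    (hrec : ∀ k ∈ Finset.Icc 1 H, ∀ s a,
      QE P r πstar k s πstar - Qst P r πstar k s a ≤ μ)
    (εb : ℝ)
    (hloss : (1 / (H : ℝ)) * ∑ h ∈ Finset.range H, ∑ s,
      stateDist P ρ π h s * (1 - π s (f s)) = εb) :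
    J P r ρ H πstar - J P r ρ H π ≤ μ * H * εb := by
  have hJ : J P r ρ H πstar - J P r ρ H π
      = ∑ s, ρ s * (QE P r πstar H s πstar - QE P r π H s π) := by
    simp only [J, Jn, QEn, QE, Qst, mul_sub, Finset.sum_sub_distrib]
  have hpdl := pdl_aux P r πstar π H ρ
  have hρd : ∀ s, stateDist P ρ π 0 s = ρ s := fun _ => rfl
  rw [hJ]
  have hpdl' : ∑ s, ρ s * (QE P r πstar H s πstar - QE P r π H s π)
      = ∑ h ∈ Finset.range H, ∑ s, stateDist P ρ π h s *
          (QE P r πstar (H-h) s πstar - QE P r πstar (H-h) s π) := hpdl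
  rw [hpdl']
  -- pointwise bound for k ∈ [1, H]
  have hgap : ∀ k, 1 ≤ k → k ≤ H → ∀ s,
      QE P r πstar k s πstar - QE P r πstar k s π ≤ μ * (1 - π s (f s)) := by
    intro k hk1 hkH s
    have hsum1 : ∑ a, π s a = 1 := (hπ s).2
    have hVs : QE P r πstar k s πstar = Qst P r πstar k s (f s) := by
      simp [QE, hdet, Finset.sum_ite_eq', Finset.mem_univ]
    have hdec : QE P r πstar k s πstar - QE P r πstar k s π
        = ∑ a, π s a * (QE P r πstar k s πstar - Qst P r πstar k s a) := by
      simp only [mul_sub, Finset.sum_sub_distrib, ← Finset.sum_mul, hsum1, one_mul, QE]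
    rw [hdec]
    have hle : ∀ a ∈ Finset.univ (α := A),
        π s a * (QE P r πstar k s πstar - Qst P r πstar k s a)
          ≤ (if a = f s then 0 else π s a * μ) := by
      intro a _
      by_cases ha : a = f s
      · simp [ha, ← hVs]
      · simp only [if_neg ha]
        exact mul_le_mul_of_nonneg_left
          (hrec k (Finset.mem_Icc.mpr ⟨hk1, hkH⟩) s a) ((hπ s).1 a)
    refine le_trans (Finset.sum_le_sum hle) ?_
    have : ∀ a, (if a = f s then 0 else π s a * μ)
        = π s a * μ - (if a = f s then π s (f s) * μ else 0) := by
      intro a; by_cases ha : a = f s <;> simp [ha]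
    simp only [this, Finset.sum_sub_distrib, ← Finset.sum_mul, hsum1,
      Finset.sum_ite_eq', Finset.mem_univ, if_true]
    ring_nf
    exact le_refl _
  have hdnn : ∀ h s, 0 ≤ stateDist P ρ π h s :=
    fun h s => stateDist_nonneg P π ρ hP hπ hρ.1 h s
  have hbound : ∑ h ∈ Finset.range H, ∑ s, stateDist P ρ π h s *
        (QE P r πstar (H-h) s πstar - QE P r πstar (H-h) s π)
      ≤ μ * ∑ h ∈ Finset.range H, ∑ s, stateDist P ρ π h s * (1 - π s (f s)) := by
    rw [Finset.mul_sum]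
    refine Finset.sum_le_sum fun h hh => ?_
    rw [Finset.mul_sum]
    refine Finset.sum_le_sum fun s _ => ?_
    have hh' := Finset.mem_range.mp hh
    have h1 : 1 ≤ H - h := by omega
    have h2 : H - h ≤ H := Nat.sub_le H h
    calc stateDist P ρ π h s * (QE P r πstar (H-h) s πstar - QE P r πstar (H-h) s π)
        ≤ stateDist P ρ π h s * (μ * (1 - π s (f s))) :=
          mul_le_mul_of_nonneg_left (hgap (H-h) h1 h2 s) (hdnn h s)
      _ = μ * (stateDist P ρ π h s * (1 - π s (f s))) := by ring
  refine le_trans hbound ?_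
  rcases Nat.eq_zero_or_pos H with hH | hH
  · subst hH; simp
  · have hHne : (H : ℝ) ≠ 0 := Nat.cast_ne_zero.mpr (by omega)
    have : (∑ h ∈ Finset.range H, ∑ s, stateDist P ρ π h s * (1 - π s (f s)))
        = H * εb := by
      field_simp at hloss
      linarith [hloss]
    rw [this]; ring_nf; exact le_refl _
end
end
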